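/- Define h_af : ℝ⁵ → ℝ by h_af(x, z, p₁, p₂, q₂) = 300·x·p₁ + (1−x)·(100·(1/2 − q₂) + (1/2)·(100·z·(1−p₂) + 100·(1−z)·q₂)) and h_nf : ℝ⁴ → ℝ by h_nf(x, z, p, q) = 300·x·p + (1−x)·(100·(1/2 − q) + (1/2)·(100·z·(1−p) + 100·(1−z)·q)). Then the supremum over (x, z) ∈ [0,1]² of the infimum over (p₁, p₂, q₂) ∈ [1/10, 2/5]³ of h_af is strictly less than the supremum over (x, z) ∈ [0,1]² of the infimum over (p, q) ∈ [1/10, 2/5]² of h_nf; in particular the two optimal values differ (40 < 360/7). -/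
import Mathlib


noncomputable def hAf (x z p₁ p₂ q₂ : ℝ) : ℝ :=
  300 * x * p₁ + (1 - x) * (100 * (1/2 - q₂)
    + (1/2) * (100 * z * (1 - p₂) + 100 * (1 - z) * q₂))

noncomputable def hNf (x z p q : ℝ) : ℝ :=
  300 * x * p + (1 - x) * (100 * (1/2 - q)
    + (1/2) * (100 * z * (1 - p) + 100 * (1 - z) * q))

theorem order_of_play_matters_aRect :
    sSup {v : ℝ | ∃ x ∈ Set.Icc (0 : ℝ) 1, ∃ z ∈ Set.Icc (0 : ℝ) 1,
        v = sInf {w : ℝ | ∃ p₁ ∈ Set.Icc (1/10 : ℝ) (2/5), ∃ p₂ ∈ Set.Icc (1/10 : ℝ) (2/5),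
          ∃ q₂ ∈ Set.Icc (1/10 : ℝ) (2/5), w = hAf x z p₁ p₂ q₂}}
      <
    sSup {v : ℝ | ∃ x ∈ Set.Icc (0 : ℝ) 1, ∃ z ∈ Set.Icc (0 : ℝ) 1,
        v = sInf {w : ℝ | ∃ p ∈ Set.Icc (1/10 : ℝ) (2/5), ∃ q ∈ Set.Icc (1/10 : ℝ) (2/5),
          w = hNf x z p q}} := by
  have key : (40 : ℝ) < 360/7 := by norm_num
  have hLHS : sSup {v : ℝ | ∃ x ∈ Set.Icc (0 : ℝ) 1, ∃ z ∈ Set.Icc (0 : ℝ) 1,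
        v = sInf {w : ℝ | ∃ p₁ ∈ Set.Icc (1/10 : ℝ) (2/5), ∃ p₂ ∈ Set.Icc (1/10 : ℝ) (2/5),
          ∃ q₂ ∈ Set.Icc (1/10 : ℝ) (2/5), w = hAf x z p₁ p₂ q₂}} ≤ 40 := by
    apply Real.sSup_le
    · rintro v ⟨x, ⟨hx0, hx1⟩, z, ⟨hz0, hz1⟩, rfl⟩
      have hbdd : BddBelow {w : ℝ | ∃ p₁ ∈ Set.Icc (1/10 : ℝ) (2/5),
          ∃ p₂ ∈ Set.Icc (1/10 : ℝ) (2/5), ∃ q₂ ∈ Set.Icc (1/10 : ℝ) (2/5),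
          w = hAf x z p₁ p₂ q₂} := by
        refine ⟨0, ?_⟩
        rintro w ⟨p₁, ⟨h1, h1'⟩, p₂, ⟨h2, h2'⟩, q₂, ⟨h3, h3'⟩, rfl⟩
        unfold hAf
        nlinarith [mul_nonneg (sub_nonneg.2 hx1) (sub_nonneg.2 hz1),
          mul_nonneg hx0 (le_trans (by norm_num) h1), mul_nonneg (sub_nonneg.2 hx1) hz0,
          mul_nonneg (mul_nonneg (sub_nonneg.2 hx1) hz0) (sub_nonneg.2 h2'),
          mul_nonneg (mul_nonneg (sub_nonneg.2 hx1) (sub_nonneg.2 hz1)) (le_trans (by norm_num) h3)]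
      have hmem : hAf x z (1/10) (2/5) (2/5) ∈ {w : ℝ | ∃ p₁ ∈ Set.Icc (1/10 : ℝ) (2/5),
          ∃ p₂ ∈ Set.Icc (1/10 : ℝ) (2/5), ∃ q₂ ∈ Set.Icc (1/10 : ℝ) (2/5),
          w = hAf x z p₁ p₂ q₂} := by
        exact ⟨1/10, by norm_num, 2/5, by norm_num, 2/5, by norm_num⟩
      refine le_trans (csInf_le hbdd hmem) ?_
      unfold hAf
      nlinarith [mul_nonneg (sub_nonneg.2 hx1) (sub_nonneg.2 hz1)]
    · norm_num
  have hRHS : (360/7 : ℝ) ≤ sSup {v : ℝ | ∃ x ∈ Set.Icc (0 : ℝ) 1, ∃ z ∈ Set.Icc (0 : ℝ) 1,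
        v = sInf {w : ℝ | ∃ p ∈ Set.Icc (1/10 : ℝ) (2/5), ∃ q ∈ Set.Icc (1/10 : ℝ) (2/5),
          w = hNf x z p q}} := by
    have hbddA : BddAbove {v : ℝ | ∃ x ∈ Set.Icc (0 : ℝ) 1, ∃ z ∈ Set.Icc (0 : ℝ) 1,
        v = sInf {w : ℝ | ∃ p ∈ Set.Icc (1/10 : ℝ) (2/5), ∃ q ∈ Set.Icc (1/10 : ℝ) (2/5),
          w = hNf x z p q}} := by
      refine ⟨200, ?_⟩
      rintro v ⟨x, ⟨hx0, hx1⟩, z, ⟨hz0, hz1⟩, rfl⟩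
      have hbdd : BddBelow {w : ℝ | ∃ p ∈ Set.Icc (1/10 : ℝ) (2/5),
          ∃ q ∈ Set.Icc (1/10 : ℝ) (2/5), w = hNf x z p q} := by
        refine ⟨-1000, ?_⟩
        rintro w ⟨p, ⟨h1, h1'⟩, q, ⟨h2, h2'⟩, rfl⟩
        unfold hNf
        nlinarith [mul_nonneg hx0 (le_trans (by norm_num) h1), mul_nonneg (sub_nonneg.2 hx1) hz0,
          mul_nonneg (mul_nonneg (sub_nonneg.2 hx1) hz0) (sub_nonneg.2 h1'),
          mul_nonneg (mul_nonneg (sub_nonneg.2 hx1) (sub_nonneg.2 hz1)) (le_trans (by norm_num) h2)]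
      have hmem : hNf x z (1/10) (1/10) ∈ {w : ℝ | ∃ p ∈ Set.Icc (1/10 : ℝ) (2/5),
          ∃ q ∈ Set.Icc (1/10 : ℝ) (2/5), w = hNf x z p q} :=
        ⟨1/10, by norm_num, 1/10, by norm_num⟩
      refine le_trans (csInf_le hbdd hmem) ?_
      unfold hNf
      nlinarith [mul_nonneg (sub_nonneg.2 hx1) (sub_nonneg.2 hz1),
        mul_nonneg (sub_nonneg.2 hx1) hz0]
    have hval : sInf {w : ℝ | ∃ p ∈ Set.Icc (1/10 : ℝ) (2/5),
        ∃ q ∈ Set.Icc (1/10 : ℝ) (2/5), w = hNf (1/7) 1 p q} = 360/7 := by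
      apply le_antisymm
      · have hbdd : BddBelow {w : ℝ | ∃ p ∈ Set.Icc (1/10 : ℝ) (2/5),
            ∃ q ∈ Set.Icc (1/10 : ℝ) (2/5), w = hNf (1/7) 1 p q} := by
          refine ⟨360/7, ?_⟩
          rintro w ⟨p, ⟨h1, h1'⟩, q, ⟨h2, h2'⟩, rfl⟩
          unfold hNf; nlinarith
        refine csInf_le hbdd ⟨1/10, by norm_num, 2/5, by norm_num, ?_⟩
        unfold hNf; ring
      · refine le_csInf ⟨hNf (1/7) 1 (1/10) (2/5), 1/10, by norm_num, 2/5, by norm_num, rfl⟩ ?_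
        rintro w ⟨p, ⟨h1, h1'⟩, q, ⟨h2, h2'⟩, rfl⟩
        unfold hNf; nlinarith
    refine le_csSup hbddA ⟨1/7, by norm_num, 1, by norm_num, hval.symm⟩
  linarith
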